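/- arXiv:1907.05244 — 12 statements merged into one kernel-verified Lean document; each statement's English description precedes it below -/
import Mathlib

section
/- Let M1, M2 and W be lawful monads (on types). Let θ1 : ∀ A, M1 A → W A and θ2 : ∀ A, M2 A → W A be monad morphisms, i.e. θi (pure a) = pure a and θi (bind m f) = bind (θi m) (θi ∘ f). Suppose that for all c1 : M1 A1 and c2 : M2 A2 the computations θ1 c1 and θ2 c2 commute in W. Define θrel (c1, c2) := bind (θ1 c1) (fun a1 => bind (θ2 c2) (fun a2 => pure (a1, a2))) : W (A1 × A2). Then θrel is a strict relational effect observation: θrel (pure a1, pure a2) = pure (a1, a2), and for all m1 : M1 A1, m2 : M2 A2, f1 : A1 → M1 B1, f2 : A2 → M2 B2, θrel (bind m1 f1, bind m2 f2) = bind (θrel (m1, m2)) (fun p => θrel (f1 p.1, f2 p.2)). -/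
section Commute

variable {W : Type → Type} [Monad W] [LawfulMonad W]

-- Every continuation `h a b` factors through the pair `(a, b)`.
theorem bind_bind_comm_of_pair_comm {A B C : Type} (x : W A) (y : W B)
    (hxy : (x >>= fun a => y >>= fun b => pure (a, b)) =
      (y >>= fun b => x >>= fun a => pure (a, b)))
    (h : A → B → W C) :
    (x >>= fun a => y >>= fun b => h a b) = (y >>= fun b => x >>= fun a => h a b) := by
  have hx : (x >>= fun a => y >>= fun b => h a b) =
      ((x >>= fun a => y >>= fun b => pure (a, b)) >>= fun p => h p.1 p.2) := by
    simp only [bind_assoc, pure_bind]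
  have hy : (y >>= fun b => x >>= fun a => h a b) =
      ((y >>= fun b => x >>= fun a => pure (a, b)) >>= fun p => h p.1 p.2) := by
    simp only [bind_assoc, pure_bind]
  rw [hx, hy, hxy]

theorem pair_bind_bind_of_comm {A1 A2 B1 B2 : Type} (x1 : W A1) (x2 : W A2)
    (k1 : A1 → W B1) (k2 : A2 → W B2)
    (hcomm : ∀ a1, (k1 a1 >>= fun b1 => x2 >>= fun a2 => pure (b1, a2)) =
      (x2 >>= fun a2 => k1 a1 >>= fun b1 => pure (b1, a2))) :
    ((x1 >>= k1) >>= fun b1 => (x2 >>= k2) >>= fun b2 => pure (b1, b2)) =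
      ((x1 >>= fun a1 => x2 >>= fun a2 => pure (a1, a2)) >>= fun p =>
        k1 p.1 >>= fun b1 => k2 p.2 >>= fun b2 => pure (b1, b2)) := by
  simp only [bind_assoc, pure_bind]
  refine bind_congr fun a1 => ?_
  exact bind_bind_comm_of_pair_comm (k1 a1) x2 (hcomm a1)
    (fun b1 a2 => k2 a2 >>= fun b2 => pure (b1, b2))

end Commute

theorem product_of_commuting_monad_morphisms_is_strict_relational_effect_observation_general
    (M1 M2 W : Type → Type) [Monad M1] [Monad M2] [Monad W]
    [LawfulMonad W]
    (θ1 : ∀ {A : Type}, M1 A → W A) (θ2 : ∀ {A : Type}, M2 A → W A)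
    (h1ret : ∀ {A : Type} (a : A), θ1 (pure a) = (pure a : W A))
    (h1bind : ∀ {A B : Type} (m : M1 A) (f : A → M1 B),
      θ1 (m >>= f) = θ1 m >>= fun a => θ1 (f a))
    (h2ret : ∀ {A : Type} (a : A), θ2 (pure a) = (pure a : W A))
    (h2bind : ∀ {A B : Type} (m : M2 A) (f : A → M2 B),
      θ2 (m >>= f) = θ2 m >>= fun a => θ2 (f a))
    (hcomm : ∀ {A1 A2 : Type} (c1 : M1 A1) (c2 : M2 A2),
      (θ1 c1 >>= fun a1 => θ2 c2 >>= fun a2 => pure (a1, a2)) =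
      (θ2 c2 >>= fun a2 => θ1 c1 >>= fun a1 => pure (a1, a2))) :
    (∀ {A1 A2 : Type} (a1 : A1) (a2 : A2),
      (θ1 (pure a1) >>= fun x1 => θ2 (pure a2) >>= fun x2 => pure (x1, x2)) =
        (pure (a1, a2) : W (A1 × A2))) ∧
    (∀ {A1 A2 B1 B2 : Type} (m1 : M1 A1) (m2 : M2 A2)
      (f1 : A1 → M1 B1) (f2 : A2 → M2 B2),
      (θ1 (m1 >>= f1) >>= fun b1 => θ2 (m2 >>= f2) >>= fun b2 => pure (b1, b2)) =
      ((θ1 m1 >>= fun a1 => θ2 m2 >>= fun a2 => pure (a1, a2)) >>= fun p =>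
        θ1 (f1 p.1) >>= fun b1 => θ2 (f2 p.2) >>= fun b2 => pure (b1, b2))) := by
  refine ⟨fun a1 a2 => ?_, fun m1 m2 f1 f2 => ?_⟩
  · rw [h1ret, h2ret, pure_bind, pure_bind]
  · rw [h1bind, h2bind]
    exact pair_bind_bind_of_comm _ _ _ _ fun a1 => hcomm (f1 a1) m2

/-- If `θ1`, `θ2` are monad morphisms whose images commute,
then `θrel (c1, c2) := bind (θ1 c1) (fun a1 => bind (θ2 c2) (fun a2 => pure (a1, a2)))`
is a strict relational effect observation. -/
theorem product_of_commuting_monad_morphisms_is_strict_relational_effect_observation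
    (M1 M2 W : Type → Type) [Monad M1] [Monad M2] [Monad W]
    [LawfulMonad M1] [LawfulMonad M2] [LawfulMonad W]
    (θ1 : ∀ {A : Type}, M1 A → W A) (θ2 : ∀ {A : Type}, M2 A → W A)
    (h1ret : ∀ {A : Type} (a : A), θ1 (pure a) = (pure a : W A))
    (h1bind : ∀ {A B : Type} (m : M1 A) (f : A → M1 B),
      θ1 (m >>= f) = θ1 m >>= fun a => θ1 (f a))
    (h2ret : ∀ {A : Type} (a : A), θ2 (pure a) = (pure a : W A))
    (h2bind : ∀ {A B : Type} (m : M2 A) (f : A → M2 B),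
      θ2 (m >>= f) = θ2 m >>= fun a => θ2 (f a))
    (hcomm : ∀ {A1 A2 : Type} (c1 : M1 A1) (c2 : M2 A2),
      (θ1 c1 >>= fun a1 => θ2 c2 >>= fun a2 => pure (a1, a2)) =
      (θ2 c2 >>= fun a2 => θ1 c1 >>= fun a1 => pure (a1, a2))) :
    (∀ {A1 A2 : Type} (a1 : A1) (a2 : A2),
      (θ1 (pure a1) >>= fun x1 => θ2 (pure a2) >>= fun x2 => pure (x1, x2)) =
        (pure (a1, a2) : W (A1 × A2))) ∧
    (∀ {A1 A2 B1 B2 : Type} (m1 : M1 A1) (m2 : M2 A2)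
      (f1 : A1 → M1 B1) (f2 : A2 → M2 B2),
      (θ1 (m1 >>= f1) >>= fun b1 => θ2 (m2 >>= f2) >>= fun b2 => pure (b1, b2)) =
      ((θ1 m1 >>= fun a1 => θ2 m2 >>= fun a2 => pure (a1, a2)) >>= fun p =>
        θ1 (f1 p.1) >>= fun b1 => θ2 (f2 p.2) >>= fun b2 => pure (b1, b2))) :=
  product_of_commuting_monad_morphisms_is_strict_relational_effect_observation_general M1 M2 W θ1 θ2
    h1ret h1bind h2ret h2bind hcomm
end

section
/- Let M1, M2 and W be lawful monads (on types), and let θrel : ∀ A1 A2, M1 A1 × M2 A2 → W (A1 × A2) be a strict relational effect observation, i.e. θrel (pure a1, pure a2) = pure (a1, a2) and θrel (bind m1 f1, bind m2 f2) = bind (θrel (m1, m2)) (fun p => θrel (f1 p.1, f2 p.2)) for all m1, m2, f1, f2. Then there exist monad morphisms θ1 : ∀ A, M1 A → W A and θ2 : ∀ A, M2 A → W A such that θ1 c1 and θ2 c2 commute in W for all c1 : M1 A1, c2 : M2 A2, and such that θrel (c1, c2) = bind (θ1 c1) (fun a1 => bind (θ2 c2) (fun a2 => pure (a1, a2))) for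 all c1, c2. -/
/-!
Pairing with the trivial computation `pure ()` on the other side turns `θrel` into the two
monad morphisms `θ₁ c₁ = Prod.fst <$> θrel c₁ (pure ())` and
`θ₂ c₂ = Prod.snd <$> θrel (pure ()) c₂`.
Writing `c₁ = c₁ >>= pure` and `c₂ = pure () >>= fun _ => c₂`, the bind law splits
`θrel c₁ c₂` into `θrel c₁ (pure ())` followed by `θrel (pure a₁) c₂`, and the latter is `θ₂ c₂`
tagged with `a₁`.
Hence `θrel c₁ c₂` is "`θ₁ c₁` then `θ₂ c₂`"; splitting in the other order shows it is also
"`θ₂ c₂` then `θ₁ c₁`", so the two observations commute.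
-/

namespace RelationalEffectObservation

variable {M1 M2 W : Type → Type} [Monad M1] [Monad M2] [Monad W]

structure IsStrict (θrel : ∀ {A1 A2 : Type}, M1 A1 → M2 A2 → W (A1 × A2)) : Prop where
  pure_pure : ∀ {A1 A2 : Type} (a1 : A1) (a2 : A2),
    θrel (pure a1) (pure a2) = (pure (a1, a2) : W (A1 × A2))
  bind_bind : ∀ {A1 A2 B1 B2 : Type} (m1 : M1 A1) (m2 : M2 A2)
    (f1 : A1 → M1 B1) (f2 : A2 → M2 B2),
    θrel (m1 >>= f1) (m2 >>= f2) = θrel m1 m2 >>= fun p => θrel (f1 p.1) (f2 p.2)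

variable (θrel : ∀ {A1 A2 : Type}, M1 A1 → M2 A2 → W (A1 × A2))

def left {A : Type} (c : M1 A) : W A := Prod.fst <$> θrel c (pure ())

def right {A : Type} (c : M2 A) : W A := Prod.snd <$> θrel (pure ()) c

variable {θrel} [LawfulMonad W]

namespace IsStrict

theorem left_pure (hθ : IsStrict θrel) {A : Type} (a : A) : left θrel (pure a) = pure a := by
  simp [left, hθ.pure_pure]

theorem right_pure (hθ : IsStrict θrel) {A : Type} (a : A) : right θrel (pure a) = pure a := by
  simp [right, hθ.pure_pure]

theorem left_bind [LawfulMonad M2] (hθ : IsStrict θrel) {A B : Type} (m : M1 A) (f : A → M1 B) :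
    left θrel (m >>= f) = left θrel m >>= fun a => left θrel (f a) := by
  have h := hθ.bind_bind m (pure ()) f fun _ => pure ()
  rw [pure_bind] at h
  simp [left, h]

theorem right_bind [LawfulMonad M1] (hθ : IsStrict θrel) {A B : Type} (m : M2 A) (f : A → M2 B) :
    right θrel (m >>= f) = right θrel m >>= fun a => right θrel (f a) := by
  have h := hθ.bind_bind (pure ()) m (fun _ => pure ()) f
  rw [pure_bind] at h
  simp [right, h]

theorem apply_pure_left [LawfulMonad M1] [LawfulMonad M2] (hθ : IsStrict θrel)
    {A1 A2 : Type} (a1 : A1) (c2 : M2 A2) :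
    θrel (pure a1) c2 = (a1, ·) <$> right θrel c2 := by
  have h := hθ.bind_bind (pure ()) c2 (fun _ => pure a1) pure
  simp only [pure_bind, bind_pure, hθ.pure_pure] at h
  simp [right, h]

theorem apply_pure_right [LawfulMonad M1] [LawfulMonad M2] (hθ : IsStrict θrel)
    {A1 A2 : Type} (c1 : M1 A1) (a2 : A2) :
    θrel c1 (pure a2) = (·, a2) <$> left θrel c1 := by
  have h := hθ.bind_bind c1 (pure ()) pure fun _ => pure a2
  simp only [pure_bind, bind_pure, hθ.pure_pure] at h
  simp [left, h]

theorem apply_eq_left_bind_right [LawfulMonad M1] [LawfulMonad M2] (hθ : IsStrict θrel)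
    {A1 A2 : Type} (c1 : M1 A1) (c2 : M2 A2) :
    θrel c1 c2 = left θrel c1 >>= fun a1 => right θrel c2 >>= fun a2 => pure (a1, a2) := by
  have h := hθ.bind_bind c1 (pure ()) pure fun _ => c2
  rw [bind_pure, pure_bind] at h
  simp [h, left, hθ.apply_pure_left]

theorem apply_eq_right_bind_left [LawfulMonad M1] [LawfulMonad M2] (hθ : IsStrict θrel)
    {A1 A2 : Type} (c1 : M1 A1) (c2 : M2 A2) :
    θrel c1 c2 = right θrel c2 >>= fun a2 => left θrel c1 >>= fun a1 => pure (a1, a2) := by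
  have h := hθ.bind_bind (pure ()) c2 (fun _ => c1) pure
  rw [bind_pure, pure_bind] at h
  simp [h, right, hθ.apply_pure_right]

end IsStrict

end RelationalEffectObservation

open RelationalEffectObservation in
/-- Any strict relational effect observation `θrel` arises from a pair of
commuting monad morphisms `θ1`, `θ2`. -/
theorem strict_relational_effect_observation_factors_through_commuting_monad_morphisms
    (M1 M2 W : Type → Type) [Monad M1] [Monad M2] [Monad W]
    [LawfulMonad M1] [LawfulMonad M2] [LawfulMonad W]
    (θrel : ∀ {A1 A2 : Type}, M1 A1 → M2 A2 → W (A1 × A2))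
    (hret : ∀ {A1 A2 : Type} (a1 : A1) (a2 : A2),
      θrel (pure a1) (pure a2) = (pure (a1, a2) : W (A1 × A2)))
    (hbind : ∀ {A1 A2 B1 B2 : Type} (m1 : M1 A1) (m2 : M2 A2)
      (f1 : A1 → M1 B1) (f2 : A2 → M2 B2),
      θrel (m1 >>= f1) (m2 >>= f2) =
        θrel m1 m2 >>= fun p => θrel (f1 p.1) (f2 p.2)) :
    ∃ θ1 : (A : Type) → M1 A → W A, ∃ θ2 : (A : Type) → M2 A → W A,
      (∀ (A : Type) (a : A), θ1 A (pure a) = pure a) ∧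
      (∀ (A B : Type) (m : M1 A) (f : A → M1 B),
        θ1 B (m >>= f) = θ1 A m >>= fun a => θ1 B (f a)) ∧
      (∀ (A : Type) (a : A), θ2 A (pure a) = pure a) ∧
      (∀ (A B : Type) (m : M2 A) (f : A → M2 B),
        θ2 B (m >>= f) = θ2 A m >>= fun a => θ2 B (f a)) ∧
      (∀ (A1 A2 : Type) (c1 : M1 A1) (c2 : M2 A2),
        (θ1 A1 c1 >>= fun a1 => θ2 A2 c2 >>= fun a2 => pure (a1, a2)) =
        (θ2 A2 c2 >>= fun a2 => θ1 A1 c1 >>= fun a1 => pure (a1, a2))) ∧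
      (∀ (A1 A2 : Type) (c1 : M1 A1) (c2 : M2 A2),
        θrel c1 c2 =
          (θ1 A1 c1 >>= fun a1 => θ2 A2 c2 >>= fun a2 => pure (a1, a2))) := by
  have hθ : IsStrict θrel := ⟨hret, hbind⟩
  refine ⟨fun _ => left θrel, fun _ => right θrel, fun _ => hθ.left_pure, fun _ _ => hθ.left_bind,
    fun _ => hθ.right_pure, fun _ _ => hθ.right_bind, fun _ _ c1 c2 => ?_,
    fun _ _ => hθ.apply_eq_left_bind_right⟩
  rw [← hθ.apply_eq_left_bind_right, ← hθ.apply_eq_right_bind_left]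
end

section
/- Let M be a lawful monad and let Γ be a relator for M, i.e. a family Γ : (A1 → A2 → Prop) → (M A1 → M A2 → Prop) such that (i) Γ is monotone: if R ≤ R' pointwise then Γ R ≤ Γ R' pointwise; (ii) if R a1 a2 then Γ R (pure a1) (pure a2); and (iii) if Γ R m1 m2 and for all a1 a2 with R a1 a2 one has Γ S (f1 a1) (f2 a2), then Γ S (bind m1 f1) (bind m2 f2). Define θΓ (c1, c2) : (A1 × A2 → Prop) → Prop by θΓ (c1, c2) φ := Γ (fun a1 a2 => φ (a1, a2)) c1 c2. Then θΓ is a simple lax relational effect observation into the backward predicate transformer specification monad WrelPure: (1) for all a1, a2, φ, if φ (a1, a2) then θΓ (pure a1, pure a2) φ; and (2) for all m1, m2, f1, f2, φ, if θΓ (m1, m2) (fun p => θΓ (f1 p.1, f2 p.2) φ) then θΓ (bind m1 f1, bind m2 f2) φ. -/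
theorem relator_induces_lax_relational_effect_observation_general
    (M : Type → Type) [Monad M]
    (Γ : ∀ {A1 A2 : Type}, (A1 → A2 → Prop) → M A1 → M A2 → Prop)
    (hret : ∀ {A1 A2 : Type} (R : A1 → A2 → Prop) (a1 : A1) (a2 : A2),
      R a1 a2 → Γ R (pure a1) (pure a2))
    (hbind : ∀ {A1 A2 B1 B2 : Type} (R : A1 → A2 → Prop) (S : B1 → B2 → Prop)
      (m1 : M A1) (m2 : M A2) (f1 : A1 → M B1) (f2 : A2 → M B2),
      Γ R m1 m2 → (∀ a1 a2, R a1 a2 → Γ S (f1 a1) (f2 a2)) →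
      Γ S (m1 >>= f1) (m2 >>= f2)) :
    (∀ {A1 A2 : Type} (a1 : A1) (a2 : A2) (φ : A1 × A2 → Prop),
      φ (a1, a2) → Γ (fun x1 x2 => φ (x1, x2)) (pure a1) (pure a2)) ∧
    (∀ {A1 A2 B1 B2 : Type} (m1 : M A1) (m2 : M A2)
      (f1 : A1 → M B1) (f2 : A2 → M B2) (φ : B1 × B2 → Prop),
      Γ (fun a1 a2 => Γ (fun b1 b2 => φ (b1, b2)) (f1 a1) (f2 a2)) m1 m2 →
      Γ (fun b1 b2 => φ (b1, b2)) (m1 >>= f1) (m2 >>= f2)) :=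
  ⟨fun a1 a2 φ => hret (fun x1 x2 => φ (x1, x2)) a1 a2,
    -- bind with the intermediate relation taken to be the precondition of the continuations
    fun m1 m2 f1 f2 _ h => hbind _ _ m1 m2 f1 f2 h fun _ _ => id⟩

/-- A relator `Γ` over a lawful monad `M` induces a simple lax relational
effect observation `θΓ (c1, c2) φ := Γ (fun a1 a2 => φ (a1, a2)) c1 c2` into the
backward predicate transformer specification monad `WrelPure`. -/
theorem relator_induces_lax_relational_effect_observation
    (M : Type → Type) [Monad M] [LawfulMonad M]
    (Γ : ∀ {A1 A2 : Type}, (A1 → A2 → Prop) → M A1 → M A2 → Prop)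
    (hmono : ∀ {A1 A2 : Type} (R R' : A1 → A2 → Prop),
      (∀ a1 a2, R a1 a2 → R' a1 a2) →
      ∀ (m1 : M A1) (m2 : M A2), Γ R m1 m2 → Γ R' m1 m2)
    (hret : ∀ {A1 A2 : Type} (R : A1 → A2 → Prop) (a1 : A1) (a2 : A2),
      R a1 a2 → Γ R (pure a1) (pure a2))
    (hbind : ∀ {A1 A2 B1 B2 : Type} (R : A1 → A2 → Prop) (S : B1 → B2 → Prop)
      (m1 : M A1) (m2 : M A2) (f1 : A1 → M B1) (f2 : A2 → M B2),
      Γ R m1 m2 → (∀ a1 a2, R a1 a2 → Γ S (f1 a1) (f2 a2)) →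
      Γ S (m1 >>= f1) (m2 >>= f2)) :
    (∀ {A1 A2 : Type} (a1 : A1) (a2 : A2) (φ : A1 × A2 → Prop),
      φ (a1, a2) → Γ (fun x1 x2 => φ (x1, x2)) (pure a1) (pure a2)) ∧
    (∀ {A1 A2 B1 B2 : Type} (m1 : M A1) (m2 : M A2)
      (f1 : A1 → M B1) (f2 : A2 → M B2) (φ : B1 × B2 → Prop),
      Γ (fun a1 a2 => Γ (fun b1 b2 => φ (b1, b2)) (f1 a1) (f2 a2)) m1 m2 →
      Γ (fun b1 b2 => φ (b1, b2)) (m1 >>= f1) (m2 >>= f2)) :=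
  relator_induces_lax_relational_effect_observation_general M Γ hret hbind
end

section
/- Fix exception types E1, E2 and define the unary specification monads W1 A := ((A ⊕ E1) → Prop) → Prop with ret1 a := fun φ => φ (Sum.inl a) and bind1 w g := fun φ => w (fun ae => match ae with | Sum.inl a => g a φ | Sum.inr e => φ (Sum.inr e)), and W2 symmetrically over E2. Define WrelExc(A1, A2) := ((A1 ⊕ E1) × (A2 ⊕ E2) → Prop) → Prop with retrel (a1, a2) := fun φ => φ (Sum.inl a1, Sum.inl a2) and bindrel wm f1 f2 f := fun φ => wm (fun ae => match ae with | (Sum.inl a1, Sum.inl a2) => f (a1, a2) φ | (Sum.inr e1, Sum.inr e2) => φ (Sum.inr e1, Sum.inr e2) | (Sum.inl a1, Sum.inr e2) => f1 a1 (fun be => φ (be, Sum.inr e2)) | (Sum.inr e1, Sum.inl a2) => f2 a2 (fun be => φ (Sum.inr e1, be))). Then these operations satisfy the relative-monad laws: (left unit) bindrel (retrel (a1, a2)) f1 f2 f = f (a1, a2); (right unit) bindrel wm ret1 ret2 retrel = wm; (associativity) bindrel (bindrel wm f1 f2 f) g1 g2 g = bindrel wm (fun a1 => bind1 (f1 a1)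 g1) (fun a2 => bind2 (f2 a2) g2) (fun p => bindrel (f p) g1 g2 g). -/
/-!
A relational bind only inspects `wm` through the postcondition it hands to it, so all three laws
reduce to equalities of postconditions, checked on each of the four shapes of a pair of
outcomes. The only non-definitional case of associativity is the mixed one: once one side has
raised an exception, the relational continuation restricted to that side is the unary one.
-/

/-- Unary specification monad for exceptions of type `E`. -/
def WExc (E A : Type) : Type := ((A ⊕ E) → Prop) → Prop

def retWExc {E A : Type} (a : A) : WExc E A := fun φ => φ (Sum.inl a)

def bindWExc {E A B : Type} (w : WExc E A) (g : A → WExc E B) : WExc E B :=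
  fun φ => w (fun ae => match ae with
    | Sum.inl a => g a φ
    | Sum.inr e => φ (Sum.inr e))

/-- Relational specification monad for exceptions. -/
def WrelExc (E1 E2 A1 A2 : Type) : Type := ((A1 ⊕ E1) × (A2 ⊕ E2) → Prop) → Prop

def retWrelExc {E1 E2 A1 A2 : Type} (a : A1 × A2) : WrelExc E1 E2 A1 A2 :=
  fun φ => φ (Sum.inl a.1, Sum.inl a.2)

def bindWrelExc {E1 E2 A1 A2 B1 B2 : Type} (wm : WrelExc E1 E2 A1 A2)
    (f1 : A1 → WExc E1 B1) (f2 : A2 → WExc E2 B2)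
    (f : A1 × A2 → WrelExc E1 E2 B1 B2) : WrelExc E1 E2 B1 B2 :=
  fun φ => wm (fun ae => match ae with
    | (Sum.inl a1, Sum.inl a2) => f (a1, a2) φ
    | (Sum.inr e1, Sum.inr e2) => φ (Sum.inr e1, Sum.inr e2)
    | (Sum.inl a1, Sum.inr e2) => f1 a1 (fun be => φ (be, Sum.inr e2))
    | (Sum.inr e1, Sum.inl a2) => f2 a2 (fun be => φ (Sum.inr e1, be)))

def bindWExcPost {E A B : Type} (g : A → WExc E B) (φ : B ⊕ E → Prop) : A ⊕ E → Prop
  | Sum.inl a => g a φ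
  | Sum.inr e => φ (Sum.inr e)

def bindWrelExcPost {E1 E2 A1 A2 B1 B2 : Type}
    (f1 : A1 → WExc E1 B1) (f2 : A2 → WExc E2 B2) (f : A1 × A2 → WrelExc E1 E2 B1 B2)
    (φ : (B1 ⊕ E1) × (B2 ⊕ E2) → Prop) : (A1 ⊕ E1) × (A2 ⊕ E2) → Prop
  | (Sum.inl a1, Sum.inl a2) => f (a1, a2) φ
  | (Sum.inr e1, Sum.inr e2) => φ (Sum.inr e1, Sum.inr e2)
  | (Sum.inl a1, Sum.inr e2) => f1 a1 (fun be => φ (be, Sum.inr e2))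
  | (Sum.inr e1, Sum.inl a2) => f2 a2 (fun be => φ (Sum.inr e1, be))

section

variable {E1 E2 A1 A2 B1 B2 C1 C2 : Type}

theorem bindWExc_apply {E A B : Type} (w : WExc E A) (g : A → WExc E B) (φ : B ⊕ E → Prop) :
    bindWExc w g φ = w (bindWExcPost g φ) :=
  rfl

theorem bindWrelExc_apply (wm : WrelExc E1 E2 A1 A2)
    (f1 : A1 → WExc E1 B1) (f2 : A2 → WExc E2 B2) (f : A1 × A2 → WrelExc E1 E2 B1 B2)
    (φ : (B1 ⊕ E1) × (B2 ⊕ E2) → Prop) :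
    bindWrelExc wm f1 f2 f φ = wm (bindWrelExcPost f1 f2 f φ) :=
  rfl

theorem bindWrelExcPost_retWExc_retWExc_retWrelExc (φ : (A1 ⊕ E1) × (A2 ⊕ E2) → Prop) :
    bindWrelExcPost retWExc retWExc retWrelExc φ = φ := by
  funext ae
  rcases ae with ⟨_ | _, _ | _⟩ <;> rfl

theorem bindWrelExcPost_inr_right
    (g1 : B1 → WExc E1 C1) (g2 : B2 → WExc E2 C2) (g : B1 × B2 → WrelExc E1 E2 C1 C2)
    (φ : (C1 ⊕ E1) × (C2 ⊕ E2) → Prop) (e2 : E2) :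
    (fun be => bindWrelExcPost g1 g2 g φ (be, Sum.inr e2)) =
      bindWExcPost g1 (fun ce => φ (ce, Sum.inr e2)) := by
  funext be
  cases be <;> rfl

theorem bindWrelExcPost_inr_left
    (g1 : B1 → WExc E1 C1) (g2 : B2 → WExc E2 C2) (g : B1 × B2 → WrelExc E1 E2 C1 C2)
    (φ : (C1 ⊕ E1) × (C2 ⊕ E2) → Prop) (e1 : E1) :
    (fun be => bindWrelExcPost g1 g2 g φ (Sum.inr e1, be)) =
      bindWExcPost g2 (fun ce => φ (Sum.inr e1, ce)) := by
  funext be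
  cases be <;> rfl

theorem bindWrelExcPost_bindWrelExcPost
    (f1 : A1 → WExc E1 B1) (f2 : A2 → WExc E2 B2) (f : A1 × A2 → WrelExc E1 E2 B1 B2)
    (g1 : B1 → WExc E1 C1) (g2 : B2 → WExc E2 C2) (g : B1 × B2 → WrelExc E1 E2 C1 C2)
    (φ : (C1 ⊕ E1) × (C2 ⊕ E2) → Prop) :
    bindWrelExcPost f1 f2 f (bindWrelExcPost g1 g2 g φ) =
      bindWrelExcPost (fun a1 => bindWExc (f1 a1) g1) (fun a2 => bindWExc (f2 a2) g2)
        (fun p => bindWrelExc (f p) g1 g2 g) φ := by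
  funext ae
  rcases ae with ⟨a1 | e1, a2 | e2⟩
  · rfl
  · show f1 a1 _ = bindWExc (f1 a1) g1 _
    rw [bindWExc_apply, bindWrelExcPost_inr_right]
  · show f2 a2 _ = bindWExc (f2 a2) g2 _
    rw [bindWExc_apply, bindWrelExcPost_inr_left]
  · rfl

theorem bindWrelExc_retWrelExc (a1 : A1) (a2 : A2)
    (f1 : A1 → WExc E1 B1) (f2 : A2 → WExc E2 B2) (f : A1 × A2 → WrelExc E1 E2 B1 B2) :
    bindWrelExc (retWrelExc (a1, a2)) f1 f2 f = f (a1, a2) :=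
  rfl

theorem bindWrelExc_retWExc_retWExc_retWrelExc (wm : WrelExc E1 E2 A1 A2) :
    bindWrelExc wm retWExc retWExc retWrelExc = wm := by
  funext φ
  rw [bindWrelExc_apply, bindWrelExcPost_retWExc_retWExc_retWrelExc]

theorem bindWrelExc_bindWrelExc (wm : WrelExc E1 E2 A1 A2)
    (f1 : A1 → WExc E1 B1) (f2 : A2 → WExc E2 B2) (f : A1 × A2 → WrelExc E1 E2 B1 B2)
    (g1 : B1 → WExc E1 C1) (g2 : B2 → WExc E2 C2) (g : B1 × B2 → WrelExc E1 E2 C1 C2) :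
    bindWrelExc (bindWrelExc wm f1 f2 f) g1 g2 g =
      bindWrelExc wm (fun a1 => bindWExc (f1 a1) g1) (fun a2 => bindWExc (f2 a2) g2)
        (fun p => bindWrelExc (f p) g1 g2 g) := by
  funext φ
  rw [bindWrelExc_apply, bindWrelExc_apply, bindWrelExc_apply, bindWrelExcPost_bindWrelExcPost]

end

/-- the exceptional relational specification operations satisfy the
relative-monad laws (left unit, right unit, associativity). -/
theorem WrelExc_relative_monad_laws {E1 E2 : Type} :
    (∀ {A1 A2 B1 B2 : Type} (a1 : A1) (a2 : A2)
      (f1 : A1 → WExc E1 B1) (f2 : A2 → WExc E2 B2)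
      (f : A1 × A2 → WrelExc E1 E2 B1 B2),
      bindWrelExc (retWrelExc (a1, a2)) f1 f2 f = f (a1, a2)) ∧
    (∀ {A1 A2 : Type} (wm : WrelExc E1 E2 A1 A2),
      bindWrelExc wm retWExc retWExc retWrelExc = wm) ∧
    (∀ {A1 A2 B1 B2 C1 C2 : Type} (wm : WrelExc E1 E2 A1 A2)
      (f1 : A1 → WExc E1 B1) (f2 : A2 → WExc E2 B2)
      (f : A1 × A2 → WrelExc E1 E2 B1 B2)
      (g1 : B1 → WExc E1 C1) (g2 : B2 → WExc E2 C2)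
      (g : B1 × B2 → WrelExc E1 E2 C1 C2),
      bindWrelExc (bindWrelExc wm f1 f2 f) g1 g2 g =
        bindWrelExc wm (fun a1 => bindWExc (f1 a1) g1) (fun a2 => bindWExc (f2 a2) g2)
          (fun p => bindWrelExc (f p) g1 g2 g)) :=
  ⟨bindWrelExc_retWrelExc, bindWrelExc_retWExc_retWExc_retWrelExc, bindWrelExc_bindWrelExc⟩
end

section
/- Fix exception types E1, E2 and let Exc_i A := A ⊕ E_i with catch (c : A ⊕ E) (cerr : E → A ⊕ E) := match c with | Sum.inl a => Sum.inl a | Sum.inr e => cerr e. Define WrelErr(A1, A2) := ((A1 × A2 ⊕ Unit) → Prop) → Prop ordered by w' ≤ w iff ∀ φ, w φ → w' φ, and the effect observation θErr (c1, c2) φ := match c1, c2 with | (Sum.inl a1, Sum.inl a2) => φ (Sum.inl (a1, a2)) | _, _ => φ (Sum.inr ()). Then the Catch rule is sound: if θErr (c1, c2) ≤ w, and θErr (c1err e1, c2err e2) ≤ werr for all e1, e2, and θErr (c1err e1, Sum.inl a2) ≤ werr for all e1, a2, and θErr (Sum.inl a1, c2err e2) ≤ werr for all a1, e2, then θErr (catch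 c1 c1err, catch c2 c2err) ≤ fun φ => w (fun a0 => match a0 with | Sum.inl a => φ (Sum.inl a) | Sum.inr () => werr φ). -/
/-- Catching exceptions in the exception monad `A ⊕ E`. -/
def catchExc {A E : Type} (c : A ⊕ E) (cerr : E → A ⊕ E) : A ⊕ E :=
  match c with
  | Sum.inl a => Sum.inl a
  | Sum.inr e => cerr e

/-- The coarse errorful effect observation into
`WrelErr (A1, A2) = ((A1 × A2 ⊕ Unit) → Prop) → Prop`. -/
def θErr {A1 A2 E1 E2 : Type} (c1 : A1 ⊕ E1) (c2 : A2 ⊕ E2) :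
    ((A1 × A2 ⊕ Unit) → Prop) → Prop :=
  fun φ => match c1, c2 with
    | Sum.inl a1, Sum.inl a2 => φ (Sum.inl (a1, a2))
    | _, _ => φ (Sum.inr ())

/-- soundness of the Catch rule for the coarse errorful effect
observation. The judgment `θErr (c1, c2) ≤ w` unfolds to `∀ φ, w φ → θErr (c1, c2) φ`. -/
theorem catch_rule_sound {A1 A2 E1 E2 : Type}
    (c1 : A1 ⊕ E1) (c2 : A2 ⊕ E2)
    (c1err : E1 → A1 ⊕ E1) (c2err : E2 → A2 ⊕ E2)
    (w werr : ((A1 × A2 ⊕ Unit) → Prop) → Prop)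
    (hmain : ∀ φ, w φ → θErr c1 c2 φ)
    (herr : ∀ (e1 : E1) (e2 : E2) φ, werr φ → θErr (c1err e1) (c2err e2) φ)
    (herr1 : ∀ (e1 : E1) (a2 : A2) φ, werr φ → θErr (c1err e1) ((Sum.inl a2 : A2 ⊕ E2)) φ)
    (herr2 : ∀ (a1 : A1) (e2 : E2) φ, werr φ → θErr ((Sum.inl a1 : A1 ⊕ E1)) (c2err e2) φ) :
    ∀ φ, (w (fun a0 => match a0 with
            | Sum.inl a => φ (Sum.inl a)
            | Sum.inr () => werr φ)) →
      θErr (catchExc c1 c1err) (catchExc c2 c2err) φ := by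
  intro φ hw
  -- Whenever `c1` or `c2` raises, `h` reduces to `werr φ`, which the handler hypotheses consume.
  have h := hmain _ hw
  rcases c1 with a1 | e1 <;> rcases c2 with a2 | e2
  · exact h
  · exact herr2 a1 e2 φ h
  · exact herr1 e1 a2 φ h
  · exact herr e1 e2 φ h
end

section
/- Fix input and output types I and O and define the free input-output monad inductively: IO A has constructors Ret : A → IO A, Input : (I → IO A) → IO A, and Output : O → IO A → IO A, with monadic bind defined by recursion (grafting at Ret leaves). Let H := List (I ⊕ O) and define the specification monad WIO A := (A → H → Prop) → H → Prop with retW a := fun φ h => φ a h and bindW w g := fun φ h => w (fun a h' => g a φ h') h. Define θIO : IO A → WIO A by recursion: θIO (Ret x) = retW x; θIO (Input k) = fun φ h => ∀ i, θIO (k i) φ (Sum.inl i :: h); θIO (Output o k) = fun φ h => θIO k φ (Sum.inr o :: h). Then θIO is a monad morphism: θIO (Ret x) = retW x and, for all c : IO A and f : A → IO B, θIO (bind c f) = bindW (θIO c) (fun a => θIO (f a)). -/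
/-- The free input-output monad with inputs `I` and outputs `O`. -/
inductive IOF (I O A : Type) : Type where
  | Ret : A → IOF I O A
  | Input : (I → IOF I O A) → IOF I O A
  | Output : O → IOF I O A → IOF I O A

/-- Monadic bind on `IOF`: grafting at `Ret` leaves. -/
def IOF.bind {I O A B : Type} : IOF I O A → (A → IOF I O B) → IOF I O B
  | .Ret a, f => f a
  | .Input k, f => .Input fun i => (k i).bind f
  | .Output o k, f => .Output o (k.bind f)

/-- Specification monad for input-output: backward predicate transformers over
histories `H = List (I ⊕ O)`. -/
def WIO (I O A : Type) : Type :=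
  (A → List (I ⊕ O) → Prop) → List (I ⊕ O) → Prop

def retWIO {I O A : Type} (a : A) : WIO I O A := fun φ h => φ a h

def bindWIO {I O A B : Type} (w : WIO I O A) (g : A → WIO I O B) : WIO I O B :=
  fun φ h => w (fun a h' => g a φ h') h

/-- The partial-history effect observation for input-output. -/
def θIO {I O A : Type} : IOF I O A → WIO I O A
  | .Ret x => retWIO x
  | .Input k => fun φ h => ∀ i, θIO (k i) φ (Sum.inl i :: h)
  | .Output o k => fun φ h => θIO k φ (Sum.inr o :: h)

theorem θIO_bind {I O A B : Type} (c : IOF I O A) (f : A → IOF I O B) :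
    θIO (c.bind f) = bindWIO (θIO c) (fun a => θIO (f a)) := by
  induction c with
  | Ret a => rfl
  | Input k ih => funext φ h; exact forall_congr fun i => congrFun (congrFun (ih i) φ) _
  | Output o k ih => funext φ h; exact congrFun (congrFun ih φ) _

/-- `θIO` is a monad morphism from the free input-output monad to `WIO`. -/
theorem θIO_monad_morphism {I O : Type} :
    (∀ {A : Type} (x : A), θIO (IOF.Ret x : IOF I O A) = retWIO x) ∧
    (∀ {A B : Type} (c : IOF I O A) (f : A → IOF I O B),
      θIO (c.bind f) = bindWIO (θIO c) (fun a => θIO (f a))) :=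
  ⟨fun _ => rfl, θIO_bind⟩
end

section
/- Let d be a probability mass function on A1 × A2 that is a coupling of m1 : PMF A1 and m2 : PMF A2, i.e. d.map Prod.fst = m1 and d.map Prod.snd = m2. Let dF : A1 × A2 → PMF (B1 × B2) be such that for every p : A1 × A2, dF p is a coupling of f1 p.1 and f2 p.2, i.e. (dF p).map Prod.fst = f1 p.1 and (dF p).map Prod.snd = f2 p.2, where f1 : A1 → PMF B1 and f2 : A2 → PMF B2. Then d.bind dF is a coupling of m1.bind f1 and m2.bind f2: (d.bind dF).map Prod.fst = m1.bind f1 and (d.bind dF).map Prod.snd = m2.bind f2. -/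
theorem PMF.map_bind_eq_bind_map_of_map_eq {α β γ δ : Type*} (d : PMF α) (F : α → PMF γ)
    (π : α → β) (ρ : γ → δ) (f : β → PMF δ) (hF : ∀ a, (F a).map ρ = f (π a)) :
    (d.bind F).map ρ = (d.map π).bind f := by
  rw [PMF.map_bind, PMF.bind_map]
  exact congrArg d.bind (funext hF)

/-- couplings of probability mass functions are closed under monadic bind:
if `d` is a coupling of `m1` and `m2`, and `dF p` is a coupling of `f1 p.1` and `f2 p.2`
for every `p`, then `d.bind dF` is a coupling of `m1.bind f1` and `m2.bind f2`. -/
theorem coupling_bind {A1 A2 B1 B2 : Type}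
    (m1 : PMF A1) (m2 : PMF A2) (f1 : A1 → PMF B1) (f2 : A2 → PMF B2)
    (d : PMF (A1 × A2))
    (hd1 : d.map Prod.fst = m1) (hd2 : d.map Prod.snd = m2)
    (dF : A1 × A2 → PMF (B1 × B2))
    (hdF1 : ∀ p : A1 × A2, (dF p).map Prod.fst = f1 p.1)
    (hdF2 : ∀ p : A1 × A2, (dF p).map Prod.snd = f2 p.2) :
    (d.bind dF).map Prod.fst = m1.bind f1 ∧
    (d.bind dF).map Prod.snd = m2.bind f2 := by
  subst hd1 hd2
  exact ⟨d.map_bind_eq_bind_map_of_map_eq dF Prod.fst Prod.fst f1 hdF1,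
    d.map_bind_eq_bind_map_of_map_eq dF Prod.snd Prod.snd f2 hdF2⟩
end

section
/- Let M1, M2 be lawful monads, let W be a simple relational specification monad, and let θ be a simple lax relational effect observation from M1, M2 to W. Then the asynchronous right-bind rule is derivable: for all c1 : M1 A1, m2 : M2 A2, f2 : A2 → M2 B2, wm : W(Unit, A2) and wf : A2 → W(A1, B2), if θ (pure (), m2) ≤ wm and θ (c1, f2 a2) ≤ wf a2 for all a2 : A2, then θ (c1, bind m2 f2) ≤ bindW wm (fun p => wf p.2). -/
/-- A simple relational specification monad: a preordered family `W A1 A2` with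
monotone return and bind satisfying the (relative) monad laws. -/
structure SRelSpecMonad : Type 1 where
  W : Type → Type → Type
  le : ∀ {A1 A2 : Type}, W A1 A2 → W A1 A2 → Prop
  le_refl : ∀ {A1 A2 : Type} (w : W A1 A2), le w w
  le_trans : ∀ {A1 A2 : Type} {w1 w2 w3 : W A1 A2}, le w1 w2 → le w2 w3 → le w1 w3
  ret : ∀ {A1 A2 : Type}, A1 × A2 → W A1 A2
  bind : ∀ {A1 A2 B1 B2 : Type}, W A1 A2 → (A1 × A2 → W B1 B2) → W B1 B2
  bind_mono : ∀ {A1 A2 B1 B2 : Type} {wm wm' : W A1 A2} {wf wf' : A1 × A2 → W B1 B2},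
    le wm wm' → (∀ p, le (wf p) (wf' p)) → le (bind wm wf) (bind wm' wf')
  bind_ret : ∀ {A1 A2 B1 B2 : Type} (p : A1 × A2) (wf : A1 × A2 → W B1 B2),
    bind (ret p) wf = wf p
  ret_bind : ∀ {A1 A2 : Type} (wm : W A1 A2), bind wm ret = wm
  bind_assoc : ∀ {A1 A2 B1 B2 C1 C2 : Type} (wm : W A1 A2)
    (wf : A1 × A2 → W B1 B2) (wg : B1 × B2 → W C1 C2),
    bind (bind wm wf) wg = bind wm (fun p => bind (wf p) wg)

/-- Writing `c1` as `pure () >>= fun _ => c1` turns a one-sided bind on the right into a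
synchronous bind, to which the lax bind law of `θ` applies. -/
theorem observation_bind_right_le
    (M1 M2 : Type → Type) [Monad M1] [Monad M2] [LawfulMonad M1]
    (W : SRelSpecMonad)
    (θ : ∀ {A1 A2 : Type}, M1 A1 → M2 A2 → W.W A1 A2)
    (θbind : ∀ {A1 A2 B1 B2 : Type} (m1 : M1 A1) (m2 : M2 A2)
      (f1 : A1 → M1 B1) (f2 : A2 → M2 B2),
      W.le (θ (m1 >>= f1) (m2 >>= f2))
        (W.bind (θ m1 m2) (fun p => θ (f1 p.1) (f2 p.2))))
    {A1 A2 B2 : Type} (c1 : M1 A1) (m2 : M2 A2) (f2 : A2 → M2 B2) :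
    W.le (θ c1 (m2 >>= f2)) (W.bind (θ (pure ()) m2) (fun p => θ c1 (f2 p.2))) := by
  simpa only [pure_bind] using θbind (pure ()) m2 (fun _ => c1) f2

theorem async_right_bind_rule_derivable_general
    (M1 M2 : Type → Type) [Monad M1] [Monad M2] [LawfulMonad M1]
    (W : SRelSpecMonad)
    (θ : ∀ {A1 A2 : Type}, M1 A1 → M2 A2 → W.W A1 A2)
    (θbind : ∀ {A1 A2 B1 B2 : Type} (m1 : M1 A1) (m2 : M2 A2)
      (f1 : A1 → M1 B1) (f2 : A2 → M2 B2),
      W.le (θ (m1 >>= f1) (m2 >>= f2))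
        (W.bind (θ m1 m2) (fun p => θ (f1 p.1) (f2 p.2)))) :
    ∀ {A1 A2 B2 : Type} (c1 : M1 A1) (m2 : M2 A2) (f2 : A2 → M2 B2)
      (wm : W.W Unit A2) (wf : A2 → W.W A1 B2),
      W.le (θ (pure ()) m2) wm →
      (∀ a2 : A2, W.le (θ c1 (f2 a2)) (wf a2)) →
      W.le (θ c1 (m2 >>= f2)) (W.bind wm (fun p => wf p.2)) := by
  intro A1 A2 B2 c1 m2 f2 wm wf hm hf
  exact W.le_trans (observation_bind_right_le M1 M2 W θ θbind c1 m2 f2)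
    (W.bind_mono hm fun p => hf p.2)

/-- derivability of the asynchronous right-bind rule for any
simple lax relational effect observation `θ`. -/
theorem async_right_bind_rule_derivable
    (M1 M2 : Type → Type) [Monad M1] [Monad M2] [LawfulMonad M1] [LawfulMonad M2]
    (W : SRelSpecMonad)
    (θ : ∀ {A1 A2 : Type}, M1 A1 → M2 A2 → W.W A1 A2)
    (θret : ∀ {A1 A2 : Type} (a1 : A1) (a2 : A2),
      W.le (θ (pure a1) (pure a2)) (W.ret (a1, a2)))
    (θbind : ∀ {A1 A2 B1 B2 : Type} (m1 : M1 A1) (m2 : M2 A2)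
      (f1 : A1 → M1 B1) (f2 : A2 → M2 B2),
      W.le (θ (m1 >>= f1) (m2 >>= f2))
        (W.bind (θ m1 m2) (fun p => θ (f1 p.1) (f2 p.2)))) :
    ∀ {A1 A2 B2 : Type} (c1 : M1 A1) (m2 : M2 A2) (f2 : A2 → M2 B2)
      (wm : W.W Unit A2) (wf : A2 → W.W A1 B2),
      W.le (θ (pure ()) m2) wm →
      (∀ a2 : A2, W.le (θ c1 (f2 a2)) (wf a2)) →
      W.le (θ c1 (m2 >>= f2)) (W.bind wm (fun p => wf p.2)) :=
  async_right_bind_rule_derivable_general M1 M2 W θ θbind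
end

section
/- Define the pre- /postcondition relational specifications PPrelPure(A1, A2) := Prop × (A1 × A2 → Prop) with retPP (a1, a2) := (True, fun p => p.1 = a1 ∧ p.2 = a2) and bindPP (pre, post) f := (pre ∧ ∀ a1 a2, post (a1, a2) → (f (a1, a2)).1, fun q => ∃ a1 a2, post (a1, a2) ∧ (f (a1, a2)).2 q), and the preorder (pre1, post1) ≤ (pre2, post2) iff (pre2 → pre1) and ∀ a1 a2, post1 (a1, a2) → post2 (a1, a2). Then PPrelPure satisfies the simple relational specification monad laws up to order-equivalence (≤ in both directions): (1) bindPP (retPP (a1, a2)) f ≈ f (a1, a2); (2) bindPP w retPP ≈ w; (3) bindPP (bindPP w f) g ≈ bindPP w (fun p => bindPP (f p) g); and bindPP is monotone in both arguments with respect to ≤. -/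
/-- Relational pre/postcondition specifications. -/
def PPrelPure (A1 A2 : Type) : Type := Prop × (A1 × A2 → Prop)

def retPP {A1 A2 : Type} (a : A1 × A2) : PPrelPure A1 A2 :=
  (True, fun p => p.1 = a.1 ∧ p.2 = a.2)

def bindPP {A1 A2 B1 B2 : Type} (w : PPrelPure A1 A2)
    (f : A1 × A2 → PPrelPure B1 B2) : PPrelPure B1 B2 :=
  (w.1 ∧ ∀ a1 a2, w.2 (a1, a2) → (f (a1, a2)).1,
   fun q => ∃ a1 a2, w.2 (a1, a2) ∧ (f (a1, a2)).2 q)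

/-- The preorder: `(pre1, post1) ≤ (pre2, post2)` iff `pre2 → pre1` and
`post1` entails `post2` pointwise. -/
def lePP {A1 A2 : Type} (w w' : PPrelPure A1 A2) : Prop :=
  (w'.1 → w.1) ∧ ∀ a1 a2, w.2 (a1, a2) → w'.2 (a1, a2)

/-- Order-equivalence: `≤` in both directions. -/
def equivPP {A1 A2 : Type} (w w' : PPrelPure A1 A2) : Prop :=
  lePP w w' ∧ lePP w' w

/-!
The three laws hold on the nose, not just up to `≈`: by propositional and functional
extensionality it suffices to compare preconditions and postconditions as propositions, and each
comparison is a first-order tautology (for the unit laws the equations in `retPP` substitute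
away; for associativity the existentials and the universal guards reassociate).
-/

section

variable {A1 A2 B1 B2 C1 C2 : Type}

theorem PPrelPure.ext {w w' : PPrelPure A1 A2} (hpre : w.1 ↔ w'.1)
    (hpost : ∀ a1 a2, w.2 (a1, a2) ↔ w'.2 (a1, a2)) : w = w' :=
  Prod.ext (propext hpre) (funext fun ⟨a1, a2⟩ => propext (hpost a1 a2))

theorem lePP_refl (w : PPrelPure A1 A2) : lePP w w :=
  ⟨id, fun _ _ => id⟩

theorem equivPP_of_eq {w w' : PPrelPure A1 A2} (h : w = w') : equivPP w w' :=
  h ▸ ⟨lePP_refl w, lePP_refl w⟩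

theorem retPP_bindPP (a : A1 × A2) (f : A1 × A2 → PPrelPure B1 B2) :
    bindPP (retPP a) f = f a := by
  obtain ⟨a1, a2⟩ := a
  refine PPrelPure.ext ⟨fun h => h.2 a1 a2 ⟨rfl, rfl⟩, fun h => ⟨trivial, ?_⟩⟩
    fun _ _ => ⟨?_, fun h => ⟨a1, a2, ⟨rfl, rfl⟩, h⟩⟩
  · rintro _ _ ⟨rfl, rfl⟩
    exact h
  · rintro ⟨_, _, ⟨rfl, rfl⟩, h⟩
    exact h

theorem bindPP_retPP (w : PPrelPure A1 A2) : bindPP w retPP = w :=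
  PPrelPure.ext ⟨And.left, fun h => ⟨h, fun _ _ _ => trivial⟩⟩ fun a1 a2 =>
    ⟨by rintro ⟨_, _, hw, rfl, rfl⟩; exact hw, fun hw => ⟨a1, a2, hw, rfl, rfl⟩⟩

theorem bindPP_assoc (w : PPrelPure A1 A2) (f : A1 × A2 → PPrelPure B1 B2)
    (g : B1 × B2 → PPrelPure C1 C2) :
    bindPP (bindPP w f) g = bindPP w (fun p => bindPP (f p) g) :=
  PPrelPure.ext
    ⟨fun ⟨⟨hw, hf⟩, hg⟩ =>
        ⟨hw, fun a1 a2 ha => ⟨hf a1 a2 ha, fun b1 b2 hb => hg b1 b2 ⟨a1, a2, ha, hb⟩⟩⟩,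
      fun ⟨hw, h⟩ =>
        ⟨⟨hw, fun a1 a2 ha => (h a1 a2 ha).1⟩,
          fun _ _ ⟨a1, a2, ha, hb⟩ => (h a1 a2 ha).2 _ _ hb⟩⟩
    fun _ _ =>
      ⟨fun ⟨b1, b2, ⟨a1, a2, ha, hb⟩, hc⟩ => ⟨a1, a2, ha, b1, b2, hb, hc⟩,
        fun ⟨a1, a2, ha, b1, b2, hb, hc⟩ => ⟨b1, b2, ⟨a1, a2, ha, hb⟩, hc⟩⟩

theorem bindPP_mono {w w' : PPrelPure A1 A2} {f f' : A1 × A2 → PPrelPure B1 B2}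
    (hw : lePP w w') (hf : ∀ p, lePP (f p) (f' p)) : lePP (bindPP w f) (bindPP w' f') :=
  ⟨fun ⟨hpre, hpost⟩ =>
      ⟨hw.1 hpre, fun a1 a2 ha => (hf (a1, a2)).1 (hpost a1 a2 (hw.2 a1 a2 ha))⟩,
    fun _ _ ⟨a1, a2, ha, hb⟩ => ⟨a1, a2, hw.2 a1 a2 ha, (hf (a1, a2)).2 _ _ hb⟩⟩

end

/-- `PPrelPure` satisfies the simple relational specification
monad laws up to order-equivalence, and its bind is monotone in both arguments. -/
theorem PPrelPure_relational_specification_monad_laws :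
    -- (1) left unit
    (∀ {A1 A2 B1 B2 : Type} (a1 : A1) (a2 : A2)
      (f : A1 × A2 → PPrelPure B1 B2),
      equivPP (bindPP (retPP (a1, a2)) f) (f (a1, a2))) ∧
    -- (2) right unit
    (∀ {A1 A2 : Type} (w : PPrelPure A1 A2), equivPP (bindPP w retPP) w) ∧
    -- (3) associativity
    (∀ {A1 A2 B1 B2 C1 C2 : Type} (w : PPrelPure A1 A2)
      (f : A1 × A2 → PPrelPure B1 B2) (g : B1 × B2 → PPrelPure C1 C2),
      equivPP (bindPP (bindPP w f) g) (bindPP w (fun p => bindPP (f p) g))) ∧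
    -- (4) monotonicity of bind in both arguments
    (∀ {A1 A2 B1 B2 : Type} (w w' : PPrelPure A1 A2)
      (f f' : A1 × A2 → PPrelPure B1 B2),
      lePP w w' → (∀ p, lePP (f p) (f' p)) →
      lePP (bindPP w f) (bindPP w' f')) := by
  exact ⟨fun a1 a2 f => equivPP_of_eq (retPP_bindPP (a1, a2) f),
    fun w => equivPP_of_eq (bindPP_retPP w),
    fun w f g => equivPP_of_eq (bindPP_assoc w f g),
    fun _ _ _ _ => bindPP_mono⟩
end

section
/- Fix a state type S and define the Imp monad inductively: Imp A has constructors Ret : A → Imp A, Get : (S → Imp A) → Imp A, Put : S → Imp A → Imp A, and DoWhile : Imp Bool → Imp A → Imp A, with bind defined by recursion on the first argument (grafting at Ret leaves, and bind (DoWhile b k) f = DoWhile b (bind k f)). Let WSt A be the complete lattice of monotone predicate transformers (A → S → Prop) → S → Prop (ordered by pointwise implication of preconditions), with retW a := fun φ s => φ a s and bindW w g := fun φ s => w (fun a s' => g a φ s') s. Define θPart : Imp A → WSt A by recursion: θPart (Ret x) = retW x; θPart (Get k) = fun φ s => θPart (k s) φ s; θPart (Put s' k) = fun φ s => θPart k φ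 s'; θPart (DoWhile body k) = bindW (fix (fun w => bindW (θPart body) (fun b => if b then w else retW false))) (fun _ => θPart k), where fix takes the greatest fixed point (with respect to pointwise implication) of the given monotone map on WSt Bool. Then θPart is a monad morphism: θPart (Ret x) = retW x and θPart (bind c f) = bindW (θPart c) (fun a => θPart (f a)) for all c : Imp A, f : A → Imp B. -/
/-- The `Imp` monad: syntax of imperative programs with state `S` and
unbounded iteration. -/
inductive Imp (S : Type) : Type → Type 1 where
  | Ret : {A : Type} → A → Imp S A
  | Get : {A : Type} → (S → Imp S A) → Imp S A
  | Put : {A : Type} → S → Imp S A → Imp S A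
  | DoWhile : {A : Type} → Imp S Bool → Imp S A → Imp S A

/-- Monadic bind on `Imp`: grafting at `Ret` leaves. -/
def Imp.bind {S A B : Type} : Imp S A → (A → Imp S B) → Imp S B
  | .Ret a, f => f a
  | .Get k, f => .Get fun s => (k s).bind f
  | .Put s k, f => .Put s (k.bind f)
  | .DoWhile b k, f => .DoWhile b (k.bind f)

/-- Stateful backward predicate transformers, ordered by pointwise implication
(a complete lattice). -/
def WSt (S A : Type) : Type := (A → S → Prop) → S → Prop

def retW {S A : Type} (a : A) : WSt S A := fun φ s => φ a s

def bindW {S A B : Type} (w : WSt S A) (g : A → WSt S B) : WSt S B :=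
  fun φ s => w (fun a s' => g a φ s') s

noncomputable instance instCompleteLatticeWSt (S A : Type) :
    CompleteLattice (WSt S A) := by
  unfold WSt; infer_instance

/-- The greatest fixed point (with respect to pointwise implication) of a map on
`WSt S Bool`, via the Knaster–Tarski formula. -/
def wfix {S : Type} (F : WSt S Bool → WSt S Bool) : WSt S Bool :=
  sSup {w | w ≤ F w}

/-- The partial-correctness effect observation for `Imp`. -/
def θPart {S : Type} : {A : Type} → Imp S A → WSt S A
  | _, .Ret a => retW a
  | _, .Get k => fun φ s => θPart (k s) φ s
  | _, .Put s' k => fun φ _ => θPart k φ s'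
  | _, .DoWhile body k =>
      bindW (wfix (fun w => bindW (θPart body) (fun b => if b then w else retW false)))
        (fun _ => θPart k)

theorem bindW_assoc {S A B C : Type} (w : WSt S A) (g : A → WSt S B) (h : B → WSt S C) :
    bindW (bindW w g) h = bindW w (fun a => bindW (g a) h) :=
  rfl

theorem θPart_bind {S A B : Type} (c : Imp S A) (f : A → Imp S B) :
    θPart (c.bind f) = bindW (θPart c) (fun a => θPart (f a)) := by
  induction c with
  | Ret a => rfl
  | Get k ih => funext φ s; exact congrFun (congrFun (ih s f) φ) s
  | Put s' k ih => funext φ _; exact congrFun (congrFun (ih f) φ) s'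
  -- `bind` descends only into the continuation, so no fixed-point reasoning is needed.
  | DoWhile body k _ ih => simp only [Imp.bind, θPart, ih, bindW_assoc]

/-- `θPart` is a monad morphism from `Imp` to `WSt`. -/
theorem θPart_monad_morphism {S : Type} :
    (∀ {A : Type} (x : A), θPart (Imp.Ret x : Imp S A) = retW x) ∧
    (∀ {A B : Type} (c : Imp S A) (f : A → Imp S B),
      θPart (c.bind f) = bindW (θPart c) (fun a => θPart (f a))) :=
  ⟨fun _ => rfl, θPart_bind⟩
end

section
/- Fix state types S1, S2 and consider the state monads St_{S1}, St_{S2} and the product-program monad P(A1, A2) := St_{S1 × S2}(A1 × A2). Let ⋈ be the relation between c1 : St_{S1} A1, c2 : St_{S2} A2 and c : P(A1, A2) inductively generated by the clauses: (ret) retSt a1 ⋈ retSt a2 ∼ retSt (a1, a2); (bind) if m1 ⋈ m2 ∼ m and f1 a1 ⋈ f2 a2 ∼ f (a1, a2) for all a1, a2, then bindSt m1 f1 ⋈ bindSt m2 f2 ∼ bindSt m f; (left get) get ⋈ retSt a2 ∼ fun (s1, s2) => ((s1, a2), (s1, s2)); (right get) retSt a1 ⋈ get ∼ fun (s1, s2)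 => ((a1, s2), (s1, s2)); (left put) put s ⋈ retSt a2 ∼ fun (s1, s2) => (((), a2), (s, s2)); (right put) retSt a1 ⋈ put s ∼ fun (s1, s2) => ((a1, ()), (s1, s)). Define ζ (c) : WrelSt(A1, A2) by ζ c := fun φ (s1, s2) => φ (σ (c (s1, s2))), where σ ((a1, a2), (s1, s2)) := ((a1, s1), (a2, s2)), and θSt (c1, c2) := fun φ (s1, s2) => φ (c1 s1, c2 s2). Then product programs are sound: if c1 ⋈ c2 ∼ c and ζ c ≤ w, then θSt (c1, c2) ≤ w, i.e. for all φ, s1, s2, w φ (s1, s2) implies φ (c1 s1, c2 s2). -/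
/-- The state monad. -/
def St (S A : Type) : Type := S → A × S

def retSt {S A : Type} (a : A) : St S A := fun s => (a, s)

def bindSt {S A B : Type} (m : St S A) (f : A → St S B) : St S B :=
  fun s => f (m s).1 (m s).2

def getSt {S : Type} : St S S := fun s => (s, s)

def putSt {S : Type} (s : S) : St S Unit := fun _ => ((), s)

/-- The product-program relation for state: `ProdRel c1 c2 c` means that the
product program `c : St (S1 × S2) (A1 × A2)` captures the behaviours of
`c1 : St S1 A1` and `c2 : St S2 A2`. -/
inductive ProdRel {S1 S2 : Type} :
    ∀ {A1 A2 : Type}, St S1 A1 → St S2 A2 → St (S1 × S2) (A1 × A2) → Prop where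
  | ret {A1 A2 : Type} (a1 : A1) (a2 : A2) :
      ProdRel (retSt a1) (retSt a2) (retSt (a1, a2))
  | bind {A1 A2 B1 B2 : Type} {m1 : St S1 A1} {m2 : St S2 A2}
      {m : St (S1 × S2) (A1 × A2)}
      {f1 : A1 → St S1 B1} {f2 : A2 → St S2 B2}
      {f : A1 × A2 → St (S1 × S2) (B1 × B2)} :
      ProdRel m1 m2 m → (∀ a1 a2, ProdRel (f1 a1) (f2 a2) (f (a1, a2))) →
      ProdRel (bindSt m1 f1) (bindSt m2 f2) (bindSt m f)
  | getl {A2 : Type} (a2 : A2) :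
      ProdRel getSt (retSt a2) (fun s => ((s.1, a2), s))
  | getr {A1 : Type} (a1 : A1) :
      ProdRel (retSt a1) getSt (fun s => ((a1, s.2), s))
  | putl {A2 : Type} (s : S1) (a2 : A2) :
      ProdRel (putSt s) (retSt a2) (fun st => (((), a2), (s, st.2)))
  | putr {A1 : Type} (a1 : A1) (s : S2) :
      ProdRel (retSt a1) (putSt s) (fun st => ((a1, ()), (st.1, s)))

/-- Relational backward predicate transformers for state. -/
def WrelSt (S1 S2 A1 A2 : Type) : Type :=
  ((A1 × S1) × (A2 × S2) → Prop) → S1 × S2 → Prop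

/-- The unary effect observation on product programs, swapping the components. -/
def ζSt {S1 S2 A1 A2 : Type} (c : St (S1 × S2) (A1 × A2)) : WrelSt S1 S2 A1 A2 :=
  fun φ s => φ (((c s).1.1, (c s).2.1), ((c s).1.2, (c s).2.2))

/-- The relational state effect observation. -/
def θSt {S1 S2 A1 A2 : Type} (c1 : St S1 A1) (c2 : St S2 A2) : WrelSt S1 S2 A1 A2 :=
  fun φ s => φ (c1 s.1, c2 s.2)

/-! By induction on `ProdRel`, a product program runs the two programs side by side: on
`(s1, s2)` it returns the pair of their results and final states. Hence `ζSt c = θSt c1 c2`,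
and soundness is just `ζSt c ≤ w`. -/

theorem ProdRel.apply_eq {S1 S2 A1 A2 : Type} {c1 : St S1 A1} {c2 : St S2 A2}
    {c : St (S1 × S2) (A1 × A2)} (h : ProdRel c1 c2 c) (s : S1 × S2) :
    c s = (((c1 s.1).1, (c2 s.2).1), ((c1 s.1).2, (c2 s.2).2)) := by
  induction h generalizing s with
  | bind _ _ ihm ihf => simp only [bindSt, ihm, ihf]
  | _ => rfl

theorem ProdRel.ζSt_eq_θSt {S1 S2 A1 A2 : Type} {c1 : St S1 A1} {c2 : St S2 A2}
    {c : St (S1 × S2) (A1 × A2)} (h : ProdRel c1 c2 c) : ζSt c = θSt c1 c2 := by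
  funext φ s
  simp only [ζSt, θSt, h.apply_eq]

/-- soundness of product programs for state: if `c` is a product
program of `c1` and `c2`, and `ζ c ≤ w`, then `θSt (c1, c2) ≤ w`. -/
theorem product_programs_sound {S1 S2 A1 A2 : Type}
    (c1 : St S1 A1) (c2 : St S2 A2) (c : St (S1 × S2) (A1 × A2))
    (w : WrelSt S1 S2 A1 A2)
    (hprod : ProdRel c1 c2 c)
    (hζ : ∀ φ s, w φ s → ζSt c φ s) :
    ∀ (φ : (A1 × S1) × (A2 × S2) → Prop) (s1 : S1) (s2 : S2),
      w φ (s1, s2) → φ (c1 s1, c2 s2) := by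
  intro φ s1 s2 hw
  have hθ : θSt c1 c2 φ (s1, s2) := hprod.ζSt_eq_θSt ▸ hζ φ (s1, s2) hw
  exact hθ
end

section
/- Fix state types S1, S2 and let θSt (c1, c2) := fun φ (s1, s2) => φ (c1 s1, c2 s2) for c1 : St_{S1} A1, c2 : St_{S2} A2. The synchronous if-then-else rule is sound: for all b, b1, b2 : Bool, programs c1t, c1f : St_{S1} A1, c2t, c2f : St_{S2} A2 and specifications wt, wf : WrelSt(A1, A2), if θSt (c1t, c2t) ≤ wt and θSt (c1f, c2f) ≤ wf, then θSt (if b1 then c1t else c1f, if b2 then c2t else c2f) ≤ w∙, where w∙ := fun φ s12 => (b ↔ b1 = true) ∧ (b ↔ b2 = true) ∧ (if b then wt φ s12 else wf φ s12). -/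
theorem θSt_ite_of_le {S1 S2 A1 A2 : Type} {c1t c1f : St S1 A1} {c2t c2f : St S2 A2}
    {wt wf : WrelSt S1 S2 A1 A2} (ht : ∀ φ s, wt φ s → θSt c1t c2t φ s)
    (hf : ∀ φ s, wf φ s → θSt c1f c2f φ s) (b : Bool) (φ : (A1 × S1) × (A2 × S2) → Prop)
    (s : S1 × S2) (hw : if b then wt φ s else wf φ s) :
    θSt (if b then c1t else c1f) (if b then c2t else c2f) φ s := by
  cases b
  · exact hf φ s hw
  · exact ht φ s hw

/-- soundness of the synchronous if-then-else rule for the state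
effect observation: the specification `w∙` forces the boolean guards of the two
conditionals to agree with the common value `b`. -/
theorem sync_if_rule_sound {S1 S2 A1 A2 : Type}
    (b b1 b2 : Bool)
    (c1t c1f : St S1 A1) (c2t c2f : St S2 A2)
    (wt wf : WrelSt S1 S2 A1 A2)
    (ht : ∀ φ s, wt φ s → θSt c1t c2t φ s)
    (hf : ∀ φ s, wf φ s → θSt c1f c2f φ s) :
    ∀ (φ : (A1 × S1) × (A2 × S2) → Prop) (s12 : S1 × S2),
      (((b = true) ↔ (b1 = true)) ∧ ((b = true) ↔ (b2 = true)) ∧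
        (if b then wt φ s12 else wf φ s12)) →
      θSt (if b1 then c1t else c1f) (if b2 then c2t else c2f) φ s12 := by
  rintro φ s12 ⟨hb1, hb2, hw⟩
  obtain rfl : b1 = b := (Bool.eq_iff_iff.mpr hb1).symm
  obtain rfl : b2 = b1 := (Bool.eq_iff_iff.mpr hb2).symm
  exact θSt_ite_of_le ht hf b2 φ s12 hw
end
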